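/- arXiv:2003.11289 — 5 statements merged into one kernel-verified Lean document; each statement's English description precedes it below -/
import Mathlib

section
/- Let K be a number field with 3 ∤ [K : ℚ] such that 3 splits completely in K. Then there are no units λ, μ in the ring of integers O_K with λ + μ = 1. -/
/-!
Modulo a prime of norm `3`, a solution of `λ + μ = 1` in units becomes `x + y = 1` with
`x, y ∈ 𝔽₃ˣ`, which forces `λ ≡ μ ≡ -1`. Since `3` is the product of these primes,
`λ = 3a - 1` and `μ = 3b - 1` with `a + b = 1`. Now `λ² = 1 + 3(3a² - 2a)` has norm `1`, and
`N(1 + 3x) ≡ 1 + 3 Tr x (mod 9)`, so `3 ∣ Tr a`; likewise `3 ∣ Tr b`, hence `3` divides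
`Tr (a + b) = Tr 1 = [K : ℚ]`.
-/

open NumberField

theorem eq_neg_one_of_add_eq_one_of_card_eq_three {F : Type*} [Field F] [Finite F]
    (hF : Nat.card F = 3) {x y : F} (hx : x ≠ 0) (hy : y ≠ 0) (hxy : x + y = 1) : x = -1 := by
  have := Fintype.ofFinite F
  have hsq : x * x = 1 := by
    simpa [← Nat.card_eq_fintype_card, hF, sq] using FiniteField.pow_card_sub_one_eq_one x hx
  rcases mul_self_eq_one_iff.mp hsq with rfl | h
  · exact absurd (by linear_combination hxy) hy
  · exact h

theorem Ideal.prod_eq_iInf_of_isMaximal {R : Type*} [CommRing R] {P : Finset (Ideal R)}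
    (hP : ∀ p ∈ P, p.IsMaximal) : ∏ p ∈ P, p = ⨅ p ∈ P, p :=
  Ideal.prod_eq_iInf_of_pairwise_isCoprime fun p hp q hq hne ↦
    Ideal.isCoprime_iff_sup_eq.mpr ((hP p hp).coprime_of_ne (hP q hq) hne)

theorem Algebra.dvd_trace_of_norm_one_add_smul_eq_one {A B : Type*} [CommRing A] [IsDomain A]
    [CommRing B] [Algebra A B] [Module.Free A B] [Module.Finite A B] {a : A} (ha : a ≠ 0)
    {x : B} (h : Algebra.norm A (1 + a • x) = 1) : a ∣ Algebra.trace A B x := by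
  obtain ⟨r, hr⟩ := Algebra.norm_one_add_smul a x
  have : a * (Algebra.trace A B x + r * a) = 0 := by linear_combination hr.symm.trans h
  exact ⟨-r, by linear_combination (mul_eq_zero.mp this).resolve_left ha⟩

theorem three_dvd_trace_of_isUnit_of_add_one_eq {S : Type*} [CommRing S] [Module.Free ℤ S]
    [Module.Finite ℤ S] {u c : S} (hu : IsUnit u) (hc : u + 1 = 3 * c) :
    3 ∣ Algebra.trace ℤ S c := by
  have hsq : u ^ 2 = 1 + (3 : ℤ) • ((3 : ℤ) • c ^ 2 - (2 : ℤ) • c) := by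
    simp only [zsmul_eq_mul]
    push_cast
    linear_combination (u - 1 + 3 * c) * hc
  have hnorm : Algebra.norm ℤ (1 + (3 : ℤ) • ((3 : ℤ) • c ^ 2 - (2 : ℤ) • c)) = 1 := by
    rw [← hsq, map_pow, Int.isUnit_sq (hu.map _)]
  have := Algebra.dvd_trace_of_norm_one_add_smul_eq_one three_ne_zero hnorm
  simp only [map_sub, map_smul, smul_eq_mul] at this
  omega

section

variable {S : Type*} [CommRing S] [IsDedekindDomain S] [Module.Free ℤ S] [Module.Finite ℤ S]

theorem Ideal.isMaximal_of_absNorm_prime {p : Ideal S} (hp : (Ideal.absNorm p).Prime) :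
    p.IsMaximal :=
  (Ideal.isPrime_of_irreducible_absNorm hp).isMaximal fun h ↦
    Nat.not_prime_zero (by simpa [h] using hp)

theorem add_one_mem_of_absNorm_eq_three {p : Ideal S} (hp : Ideal.absNorm p = 3) {u v : S}
    (hu : IsUnit u) (hv : IsUnit v) (huv : u + v = 1) : u + 1 ∈ p := by
  have := Ideal.isMaximal_of_absNorm_prime (hp ▸ Nat.prime_three)
  let _ := Ideal.Quotient.field p
  have hcard : Nat.card (S ⧸ p) = 3 := by
    rw [← Submodule.cardQuot_apply, ← Ideal.absNorm_apply, hp]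
  have := Nat.finite_of_card_ne_zero (hcard ▸ three_ne_zero)
  rw [← Ideal.Quotient.eq_zero_iff_mem, map_add, map_one,
    eq_neg_one_of_add_eq_one_of_card_eq_three hcard (hu.map _).ne_zero (hv.map _).ne_zero
      (by rw [← map_add, huv, map_one]), neg_add_cancel]

theorem three_dvd_add_one_of_prod_eq_span_three {P : Finset (Ideal S)}
    (hres : ∀ p ∈ P, Ideal.absNorm p = 3) (hprod : ∏ p ∈ P, p = Ideal.span {(3 : S)}) {u v : S}
    (hu : IsUnit u) (hv : IsUnit v) (huv : u + v = 1) : 3 ∣ u + 1 := by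
  rw [← Ideal.mem_span_singleton, ← hprod, Ideal.prod_eq_iInf_of_isMaximal fun p hp ↦
    Ideal.isMaximal_of_absNorm_prime (hres p hp ▸ Nat.prime_three)]
  simp only [Submodule.mem_iInf]
  exact fun p hp ↦ add_one_mem_of_absNorm_eq_three (hres p hp) hu hv huv

end

theorem no_unit_equation_of_three_splits_completely_general
    (K : Type*) [Field K] [NumberField K]
    (hdeg : ¬ (3 ∣ Module.finrank ℚ K))
    (P : Finset (Ideal (𝓞 K)))
    (hres : ∀ p ∈ P, Ideal.absNorm p = 3)
    (hprod : ∏ p ∈ P, p = Ideal.span {(3 : 𝓞 K)}) :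
    ¬ ∃ (lam mu : (𝓞 K)ˣ), (lam : 𝓞 K) + (mu : 𝓞 K) = 1 := by
  rintro ⟨lam, mu, hsum⟩
  obtain ⟨a, ha⟩ := three_dvd_add_one_of_prod_eq_span_three hres hprod lam.isUnit mu.isUnit hsum
  obtain ⟨b, hb⟩ := three_dvd_add_one_of_prod_eq_span_three hres hprod mu.isUnit lam.isUnit
    ((add_comm _ _).trans hsum)
  have hab : a + b = 1 :=
    mul_left_cancel₀ (by norm_num : (3 : 𝓞 K) ≠ 0) (by linear_combination hsum - ha - hb)
  have htrace : Algebra.trace ℤ (𝓞 K) a + Algebra.trace ℤ (𝓞 K) b = Module.finrank ℚ K := by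
    rw [← map_add, hab, ← RingOfIntegers.rank]
    simpa using Algebra.trace_algebraMap (R := ℤ) (S := 𝓞 K) 1
  apply hdeg
  exact_mod_cast htrace ▸ dvd_add (three_dvd_trace_of_isUnit_of_add_one_eq lam.isUnit ha)
    (three_dvd_trace_of_isUnit_of_add_one_eq mu.isUnit hb)

/-- If `K` is a number field with `3 ∤ [K : ℚ]` in which `3` splits completely
(i.e. `3·O_K` is a product of `[K:ℚ]` distinct prime ideals of residue field `𝔽₃`),
then there are no units `λ, μ` of `O_K` with `λ + μ = 1`. -/
theorem no_unit_equation_of_three_splits_completely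
    (K : Type*) [Field K] [NumberField K]
    (hdeg : ¬ (3 ∣ Module.finrank ℚ K))
    (P : Finset (Ideal (𝓞 K)))
    (hprime : ∀ p ∈ P, p.IsPrime)
    (hres : ∀ p ∈ P, Ideal.absNorm p = 3)
    (hcard : P.card = Module.finrank ℚ K)
    (hprod : ∏ p ∈ P, p = Ideal.span {(3 : 𝓞 K)}) :
    ¬ ∃ (lam mu : (𝓞 K)ˣ), (lam : 𝓞 K) + (mu : 𝓞 K) = 1 :=
  no_unit_equation_of_three_splits_completely_general K hdeg P hres hprod
end

section
/- Let ℓ ≥ 5 be a prime and let K be a Galois extension of ℚ of degree ℓⁿ for some n ≥ 1 in which ℓ is totally ramified. Then there is no pair of units λ, μ ∈ O_K^* with λ + μ = 1. -/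
/-!
Since `𝔏` is the radical of `(ℓ)`, every automorphism of `𝓞 K` preserves it, and as the residue
field is `𝔽_ℓ` (where every element is an integer) each automorphism acts trivially modulo `𝔏`.
Hence the norm of a unit `u` is `≡ u ^ [K : ℚ] = u ^ ℓⁿ ≡ u (mod 𝔏)` by Fermat; as the norm is
`±1`, every unit is `≡ ±1`. But `±1 ± 1 ≢ 1 (mod ℓ)` once `ℓ ≠ 3`.
-/

open NumberField

namespace Ideal

variable {A : Type*} [CommRing A]

theorem radical_span_natCast_le_comap (σ : A →+* A) (m : ℕ) :
    (span {(m : A)}).radical ≤ (span {(m : A)}).radical.comap σ := by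
  rw [comap_radical]
  refine radical_mono (span_le.mpr ?_)
  simp

theorem exists_ker_eq_of_card_quotient_eq_prime {P : Ideal A} {p : ℕ} (hp : p.Prime)
    (hP : Nat.card (A ⧸ P) = p) : ∃ ρ : A →+* ZMod p, RingHom.ker ρ = P := by
  have : Finite (A ⧸ P) := Nat.finite_of_card_ne_zero (hP ▸ hp.ne_zero)
  have : Fintype (A ⧸ P) := Fintype.ofFinite _
  let e := ZMod.ringEquivOfPrime (A ⧸ P) hp (by rw [Fintype.card_eq_nat_card, hP])
  refine ⟨e.symm.toRingHom.comp (Quotient.mk P), ?_⟩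
  rw [RingHom.ker_comp_of_injective _ e.symm.injective, mk_ker]

end Ideal

theorem ZMod.ringHom_apply_eq_of_ker_le_comap {A : Type*} [CommRing A] {n : ℕ}
    (ρ : A →+* ZMod n) (σ : A →+* A) (hσ : RingHom.ker ρ ≤ (RingHom.ker ρ).comap σ) (x : A) :
    ρ (σ x) = ρ x := by
  obtain ⟨a, ha⟩ := ZMod.intCast_surjective (ρ x)
  have hx : x - a ∈ RingHom.ker ρ := by simp [ha]
  have := hσ hx
  simp only [Ideal.mem_comap, RingHom.mem_ker, map_sub, map_intCast, sub_eq_zero] at this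
  rw [this, ha]

theorem add_ne_one_of_eq_one_or_eq_neg_one {R : Type*} [CommRing R] [Nontrivial R]
    (h3 : (3 : R) ≠ 0) {a b : R} (ha : a = 1 ∨ a = -1) (hb : b = 1 ∨ b = -1) : a + b ≠ 1 := by
  rcases ha with rfl | rfl <;> rcases hb with rfl | rfl <;> intro h
  · exact one_ne_zero (by linear_combination h)
  · exact one_ne_zero (by linear_combination -h)
  · exact one_ne_zero (by linear_combination -h)
  · exact h3 (by linear_combination -h)

namespace NumberField.RingOfIntegers

variable {K : Type*} [Field K] [NumberField K] [IsGalois ℚ K]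

theorem algebraMap_norm_eq_prod_galRestrict (x : 𝓞 K) :
    algebraMap ℤ (𝓞 K) (Algebra.norm ℤ x) =
      ∏ σ : K ≃ₐ[ℚ] K, galRestrict ℤ ℚ K (𝓞 K) σ x := by
  apply RingOfIntegers.coe_injective
  rw [map_prod, eq_intCast, map_intCast, ← map_intCast (algebraMap ℚ K), Algebra.coe_norm_int,
    Algebra.norm_eq_prod_automorphisms]
  exact Finset.prod_congr rfl fun σ _ => (algebraMap_galRestrict_apply ℤ σ x).symm

theorem pow_finrank_eq_norm_of_forall_apply_algEquiv_eq {R : Type*} [CommRing R]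
    (ρ : 𝓞 K →+* R) (hρ : ∀ (σ : 𝓞 K ≃ₐ[ℤ] 𝓞 K) x, ρ (σ x) = ρ x) (x : 𝓞 K) :
    ρ x ^ Module.finrank ℚ K = (Algebra.norm ℤ x : R) := by
  rw [← eq_intCast (ρ.comp (algebraMap ℤ (𝓞 K))), RingHom.comp_apply,
    algebraMap_norm_eq_prod_galRestrict, map_prod, Finset.prod_congr rfl fun σ _ => hρ _ x,
    Finset.prod_const, Finset.card_univ, ← Nat.card_eq_fintype_card,
    IsGalois.card_aut_eq_finrank]

theorem apply_unit_eq_one_or_eq_neg_one {p n : ℕ} [Fact p.Prime]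
    (hdeg : Module.finrank ℚ K = p ^ n) (ρ : 𝓞 K →+* ZMod p)
    (hρ : ∀ (σ : 𝓞 K ≃ₐ[ℤ] 𝓞 K) x, ρ (σ x) = ρ x) (u : (𝓞 K)ˣ) :
    ρ u = 1 ∨ ρ u = -1 := by
  rw [← ZMod.pow_card_pow (n := n) (ρ u), ← hdeg,
    pow_finrank_eq_norm_of_forall_apply_algEquiv_eq ρ hρ]
  rcases Int.isUnit_iff.mp (u.isUnit.map (Algebra.norm ℤ)) with h | h <;> simp [h]

end NumberField.RingOfIntegers

theorem no_unit_equation_of_totally_ramified_ell_extension_general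
    (ℓ : ℕ) (hℓ : ℓ.Prime) (hℓ5 : 5 ≤ ℓ) (n : ℕ)
    (K : Type*) [Field K] [NumberField K] [IsGalois ℚ K]
    (hdeg : Module.finrank ℚ K = ℓ ^ n)
    (𝔏 : Ideal (𝓞 K)) (h𝔏 : 𝔏.IsPrime)
    (hres : Ideal.absNorm 𝔏 = ℓ)
    (hram : Ideal.span {(ℓ : 𝓞 K)} = 𝔏 ^ (ℓ ^ n)) :
    ¬ ∃ (lam mu : (𝓞 K)ˣ), (lam : 𝓞 K) + (mu : 𝓞 K) = 1 := by
  rintro ⟨lam, mu, hsum⟩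
  have : Fact ℓ.Prime := ⟨hℓ⟩
  obtain ⟨ρ, hρ⟩ := Ideal.exists_ker_eq_of_card_quotient_eq_prime hℓ
    (by rw [← hres, Ideal.absNorm_apply, Submodule.cardQuot_apply])
  have hker : RingHom.ker ρ = (Ideal.span {(ℓ : 𝓞 K)}).radical := by
    rw [hρ, hram, Ideal.radical_pow _ (pow_ne_zero _ hℓ.ne_zero), h𝔏.radical]
  have hinv : ∀ (σ : 𝓞 K ≃ₐ[ℤ] 𝓞 K) x, ρ (σ x) = ρ x := fun σ =>
    ZMod.ringHom_apply_eq_of_ker_le_comap ρ (σ : 𝓞 K →+* 𝓞 K)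
      (hker ▸ Ideal.radical_span_natCast_le_comap _ ℓ)
  have h3 : (3 : ZMod ℓ) ≠ 0 := by
    rw [Ne, ← Nat.cast_ofNat, ZMod.natCast_eq_zero_iff]
    exact fun h => absurd (Nat.le_of_dvd (by norm_num) h) (by omega)
  refine add_ne_one_of_eq_one_or_eq_neg_one h3
    (RingOfIntegers.apply_unit_eq_one_or_eq_neg_one hdeg ρ hinv lam)
    (RingOfIntegers.apply_unit_eq_one_or_eq_neg_one hdeg ρ hinv mu) ?_
  rw [← map_add, hsum, map_one]

/-- Let `ℓ ≥ 5` be a prime and `K` a Galois extension of `ℚ` of degree `ℓⁿ`, `n ≥ 1`,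
in which `ℓ` is totally ramified (so `ℓ·O_K = 𝔏^(ℓⁿ)` for a prime `𝔏` of residue
field `𝔽_ℓ`). Then there is no pair of units `λ, μ ∈ O_K^*` with `λ + μ = 1`. -/
theorem no_unit_equation_of_totally_ramified_ell_extension
    (ℓ : ℕ) (hℓ : ℓ.Prime) (hℓ5 : 5 ≤ ℓ) (n : ℕ) (hn : 1 ≤ n)
    (K : Type*) [Field K] [NumberField K] [IsGalois ℚ K]
    (hdeg : Module.finrank ℚ K = ℓ ^ n)
    (𝔏 : Ideal (𝓞 K)) (h𝔏 : 𝔏.IsPrime)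
    (hres : Ideal.absNorm 𝔏 = ℓ)
    (hram : Ideal.span {(ℓ : 𝓞 K)} = 𝔏 ^ (ℓ ^ n)) :
    ¬ ∃ (lam mu : (𝓞 K)ˣ), (lam : 𝓞 K) + (mu : 𝓞 K) = 1 :=
  no_unit_equation_of_totally_ramified_ell_extension_general ℓ hℓ hℓ5 n K hdeg 𝔏 h𝔏 hres hram
end

section
/- Let K be a number field possessing a prime ideal 𝔓 above 2 of residue degree 1, and let S be a finite set of prime ideals of O_K all of odd norm (in particular 𝔓 ∉ S). Then the S-unit equation λ + μ = 1 has no solution with λ, μ ∈ O_S^*. -/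
open NumberField Multiplicative IsDedekindDomain

/-!
Since `𝔓` has even norm, `𝔓 ∉ S`, so `λ` and `μ` are `𝔓`-adic units. The residue field at `𝔓`
is `𝔽₂`, whose only nonzero element is `1`; hence `λ ≡ 1` and `μ ≡ 1 (mod 𝔓)`, and then
`-1 = (λ - 1) + (μ - 1)` would have positive `𝔓`-adic valuation.
-/

theorem Ideal.sub_one_mem_of_notMem_of_card_quotient_eq_two {R : Type*} [CommRing R]
    {I : Ideal R} (hI : Nat.card (R ⧸ I) = 2) {a : R} (ha : a ∉ I) : a - 1 ∈ I := by
  obtain ⟨x, y, hxy, -⟩ := Nat.card_eq_two_iff.mp hI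
  have : Nontrivial (R ⧸ I) := ⟨x, y, hxy⟩
  obtain ⟨u, -, hu⟩ := (Nat.card_eq_two_iff' (0 : R ⧸ I)).mp hI
  have ha' : Ideal.Quotient.mk I a ≠ 0 := by rwa [Ne, Ideal.Quotient.eq_zero_iff_mem]
  refine Ideal.Quotient.eq.mp ?_
  rw [map_one, hu _ ha', hu 1 one_ne_zero]

namespace IsDedekindDomain.HeightOneSpectrum

theorem valuation_sub_one_lt_one_of_card_quotient_eq_two {R : Type*} [CommRing R]
    [IsDedekindDomain R] {K : Type*} [Field K] [Algebra R K] [IsFractionRing R K]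
    (v : HeightOneSpectrum R) (hv : Nat.card (R ⧸ v.asIdeal) = 2) {x : K}
    (hx : v.valuation K x = 1) : v.valuation K (x - 1) < 1 := by
  -- Approximate `x` by some `a ∈ R`; then `a ∉ v`, so `a ≡ 1` because the residue field is `𝔽₂`.
  obtain ⟨a, ha⟩ := v.exists_valuation_sub_lt_of_integer (K := K) hx.le 1
  replace ha : v.valuation K (algebraMap R K a - x) < 1 := ha
  have hva : v.valuation K (algebraMap R K a) = 1 := by
    rw [← sub_add_cancel (algebraMap R K a) x, Valuation.map_add_eq_of_lt_right _ (hx ▸ ha), hx]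
  have ha_notMem : a ∉ v.asIdeal := fun h ↦ ((v.valuation_lt_one_iff_mem (K := K) a).mpr h).ne hva
  have ha1 : v.valuation K (algebraMap R K (a - 1)) < 1 :=
    (v.valuation_lt_one_iff_mem _).mpr <|
      Ideal.sub_one_mem_of_notMem_of_card_quotient_eq_two hv ha_notMem
  have hsplit : x - 1 = algebraMap R K (a - 1) - (algebraMap R K a - x) := by
    rw [map_sub, map_one]; ring
  rw [hsplit]
  exact Valuation.map_sub_lt _ ha1 ha

end IsDedekindDomain.HeightOneSpectrum

/-- Let `K` be a number field having a prime `𝔓` above `2` of residue degree `1`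
(i.e. `O_K/𝔓 ≅ 𝔽₂`), and let `S` be a finite set of primes of `O_K` of odd norm.
Then the `S`-unit equation `λ + μ = 1` has no solutions:  there are no
`λ, μ ∈ K^*` with `v`-adic valuation trivial for all primes `v ∉ S` and `λ + μ = 1`. -/
theorem no_S_unit_equation_solution_of_degree_one_prime_above_two
    (K : Type*) [Field K] [NumberField K]
    (𝔓 : HeightOneSpectrum (𝓞 K)) (h𝔓 : Ideal.absNorm 𝔓.asIdeal = 2)
    (S : Finset (HeightOneSpectrum (𝓞 K)))
    (hS : ∀ v ∈ S, Odd (Ideal.absNorm v.asIdeal)) :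
    ¬ ∃ lam mu : K, lam ≠ 0 ∧ mu ≠ 0 ∧
      (∀ v : HeightOneSpectrum (𝓞 K), v ∉ S → v.valuation K (lam : K) = 1) ∧
      (∀ v : HeightOneSpectrum (𝓞 K), v ∉ S → v.valuation K (mu : K) = 1) ∧
      lam + mu = 1 := by
  rintro ⟨lam, mu, -, -, hlam, hmu, hsum⟩
  have h𝔓S : 𝔓 ∉ S := fun h ↦ Nat.not_odd_iff_even.mpr even_two (h𝔓 ▸ hS 𝔓 h)
  have hcard : Nat.card (𝓞 K ⧸ 𝔓.asIdeal) = 2 := by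
    rw [← Submodule.cardQuot_apply, ← Ideal.absNorm_apply, h𝔓]
  have hlam1 := 𝔓.valuation_sub_one_lt_one_of_card_quotient_eq_two hcard (hlam 𝔓 h𝔓S)
  have hmu1 := 𝔓.valuation_sub_one_lt_one_of_card_quotient_eq_two hcard (hmu 𝔓 h𝔓S)
  have hneg_one : (lam - 1) + (mu - 1) = -1 := by linear_combination hsum
  have := Valuation.map_add_lt _ hlam1 hmu1
  rw [hneg_one, Valuation.map_neg, map_one] at this
  exact this.false
end

section
/- Let L be an odd prime and suppose there exist nonzero integers a, b with a + b ≠ 0 such that a²b²(a+b)² = 2ᵘ·Lᵛ for some nonnegative integers u, v, where writing a = ±2^{u₁}L^{v₁}, b = ±2^{u₂}L^{v₂}, a+b = ±2^{u₃}L^{v₃}, the exponents v₁, v₂, v₃ are not all equal. Then L is a Mersenne prime or a Fermat prime. -/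
/-!
Divide the relation by the smallest power of `L`. If two of the three terms still contained `L`,
it would divide the third, a signed power of two; so exactly one term keeps a factor `L ^ w` with
`w ≥ 1`, and the relation reads `±2ˣ ± 2ʸ = ±2ᶜ Lʷ`. Comparing odd parts (`x ≠ y`, as otherwise
`Lʷ` would divide `2`) gives `Lʷ = 2ᵈ ± 1`. If `Lʷ - 1 = 2ᵈ` then `L - 1 ∣ 2ᵈ`; if
`Lʷ + 1 = 2ᵈ` then `w` is odd, so `L + 1 ∣ 2ᵈ`.
-/

namespace Int

lemma exists_eq_two_pow_of_dvd_two_pow {n : ℤ} {d : ℕ} (hn : 2 ≤ n) (h : n ∣ 2 ^ d) :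
    ∃ k, 1 ≤ k ∧ n = 2 ^ k := by
  lift n to ℕ using by omega
  obtain ⟨k, -, rfl⟩ := (Nat.dvd_prime_pow Nat.prime_two).1 (by exact_mod_cast h)
  refine ⟨k, Nat.one_le_iff_ne_zero.2 ?_, by push_cast; rfl⟩
  rintro rfl
  norm_num at hn

lemma isUnit_of_odd_of_dvd_two_pow {n : ℤ} {d : ℕ} (hn : Odd n) (h : n ∣ 2 ^ d) : IsUnit n :=
  ((isCoprime_two_right.2 hn).pow_right (n := d)).isUnit_of_dvd' dvd_rfl h

lemma eq_of_two_pow_mul_eq_two_pow_mul {m n : ℤ} {a b : ℕ} (hm : Odd m) (hn : Odd n)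
    (h : 2 ^ a * m = 2 ^ b * n) : m = n := by
  wlog hab : a ≤ b generalizing a b m n
  · exact (this hn hm h.symm (le_of_not_ge hab)).symm
  obtain ⟨c, rfl⟩ := Nat.exists_eq_add_of_le hab
  have hmn : m = 2 ^ c * n := mul_left_cancel₀ (pow_ne_zero a two_ne_zero) (by rw [h]; ring)
  rcases c with _ | c
  · simpa using hmn
  · refine absurd hm (Int.not_odd_iff_even.2 ⟨2 ^ c * n, ?_⟩)
    rw [hmn]; ring

lemma odd_of_isUnit {s : ℤ} (hs : IsUnit s) : Odd s := by
  rcases isUnit_iff.1 hs with rfl | rfl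
  exacts [odd_one, odd_neg_one]

end Int

section TwoPowRelations

variable {M : ℤ} {w d : ℕ}

lemma exists_eq_two_pow_add_one_of_pow_sub_one_dvd (hM : 3 ≤ M) (h : M ^ w - 1 ∣ 2 ^ d) :
    ∃ k, 1 ≤ k ∧ M = 2 ^ k + 1 := by
  obtain ⟨k, hk, hMk⟩ :=
    Int.exists_eq_two_pow_of_dvd_two_pow (by omega) ((sub_one_dvd_pow_sub_one M w).trans h)
  exact ⟨k, hk, by omega⟩

lemma exists_eq_two_pow_sub_one_of_pow_add_one_dvd (hM : 3 ≤ M) (hodd : Odd M) (hw : w ≠ 0)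
    (h : M ^ w + 1 ∣ 2 ^ d) : ∃ k, 1 ≤ k ∧ M = 2 ^ k - 1 := by
  rcases Nat.even_or_odd w with ⟨t, rfl⟩ | hw_odd
  · -- an odd square plus one is `2 mod 4`, yet it is a power of two that is at least `4`
    exfalso
    have hsq : (M ^ t) ^ 2 % 4 = 1 := Int.sq_mod_four_eq_one_of_odd hodd.pow
    rw [← pow_mul, mul_two] at hsq
    have hMw : 3 ≤ M ^ (t + t) := hM.trans (le_self_pow₀ (by omega) hw)
    obtain ⟨j, -, hj⟩ := Int.exists_eq_two_pow_of_dvd_two_pow (by omega) h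
    have hj2 : 2 ≤ j := by
      by_contra!
      interval_cases j <;> omega
    have h4 : (4 : ℤ) ∣ 2 ^ j := by
      simpa using pow_dvd_pow (2 : ℤ) hj2
    omega
  · have := Odd.add_dvd_pow_add_pow M 1 hw_odd
    rw [one_pow] at this
    obtain ⟨k, hk, hMk⟩ := Int.exists_eq_two_pow_of_dvd_two_pow (by omega) (this.trans h)
    exact ⟨k, hk, by omega⟩

lemma mersenne_or_fermat_of_pow_sub_dvd_two_pow {ε : ℤ} (hM : 3 ≤ M) (hodd : Odd M)
    (hw : w ≠ 0) (hε : IsUnit ε) (h : M ^ w - ε ∣ 2 ^ d) :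
    ∃ k, 1 ≤ k ∧ (M = 2 ^ k - 1 ∨ M = 2 ^ k + 1) := by
  rcases Int.isUnit_iff.1 hε with rfl | rfl
  · obtain ⟨k, hk, hMk⟩ := exists_eq_two_pow_add_one_of_pow_sub_one_dvd hM h
    exact ⟨k, hk, Or.inr hMk⟩
  · rw [sub_neg_eq_add] at h
    obtain ⟨k, hk, hMk⟩ := exists_eq_two_pow_sub_one_of_pow_add_one_dvd hM hodd hw h
    exact ⟨k, hk, Or.inl hMk⟩

end TwoPowRelations

lemma mersenne_or_fermat_of_two_pow_add_two_pow_eq {M s₁ s₂ s₃ : ℤ} {x y c w : ℕ}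
    (hM : 3 ≤ M) (hodd : Odd M) (hw : w ≠ 0)
    (hs₁ : IsUnit s₁) (hs₂ : IsUnit s₂) (hs₃ : IsUnit s₃)
    (h : s₁ * 2 ^ x + s₂ * 2 ^ y = s₃ * 2 ^ c * M ^ w) :
    ∃ k, 1 ≤ k ∧ (M = 2 ^ k - 1 ∨ M = 2 ^ k + 1) := by
  wlog hxy : x ≤ y generalizing s₁ s₂ x y
  · exact this hs₂ hs₁ (by linear_combination h) (le_of_not_ge hxy)
  obtain ⟨d, rfl⟩ := Nat.exists_eq_add_of_le hxy
  have hodd_rhs : Odd (s₃ * M ^ w) := Int.odd_mul.2 ⟨Int.odd_of_isUnit hs₃, hodd.pow⟩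
  rcases d with _ | d
  · exfalso
    have hs : s₂ = s₁ := by
      have hrhs : s₃ * 2 ^ c * M ^ w ≠ 0 := by
        have := hs₃.ne_zero
        positivity
      rcases Int.isUnit_iff.1 hs₁ with rfl | rfl <;> rcases Int.isUnit_iff.1 hs₂ with rfl | rfl
      all_goals first | rfl | exact absurd (by linear_combination -h) hrhs
    rw [hs] at h
    have hs₁_eq : s₁ = s₃ * M ^ w := Int.eq_of_two_pow_mul_eq_two_pow_mul (a := x + 1) (b := c)
      (Int.odd_of_isUnit hs₁) hodd_rhs (by linear_combination h)
    have hMunit : IsUnit M := isUnit_of_dvd_unit (hs₁_eq ▸ (dvd_pow_self M hw).mul_left s₃) hs₁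
    rcases Int.isUnit_iff.1 hMunit with rfl | rfl <;> omega
  · have hodd_lhs : Odd (s₁ + s₂ * 2 ^ (d + 1)) := by
      rw [pow_succ, ← mul_assoc]
      exact (Int.odd_of_isUnit hs₁).add_even (even_two.mul_left _)
    have hodd_parts : s₁ + s₂ * 2 ^ (d + 1) = s₃ * M ^ w :=
      Int.eq_of_two_pow_mul_eq_two_pow_mul (a := x) (b := c) hodd_lhs hodd_rhs
        (by linear_combination h)
    -- `M ^ w - s₃ * s₁ = s₃ * s₂ * 2 ^ (d + 1)`, and the sign `s₃ * s₂` is its own inverse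
    refine mersenne_or_fermat_of_pow_sub_dvd_two_pow (d := d + 1) hM hodd hw (hs₃.mul hs₁)
      ⟨s₃ * s₂, ?_⟩
    linear_combination s₂ * hodd_parts - 2 ^ (d + 1) * Int.isUnit_mul_self hs₂
      + s₁ * s₂ * Int.isUnit_mul_self hs₃

lemma mersenne_or_fermat_of_add_add_eq_zero {M s₁ s₂ s₃ : ℤ} {x₁ x₂ x₃ y₁ y₂ y₃ : ℕ}
    (hM : 3 ≤ M) (hodd : Odd M) (hs₁ : IsUnit s₁) (hs₂ : IsUnit s₂) (hs₃ : IsUnit s₃)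
    (hy₂ : y₁ ≤ y₂) (hy₃ : y₁ ≤ y₃) (hy : y₁ < y₂ ∨ y₁ < y₃)
    (h : s₁ * 2 ^ x₁ * M ^ y₁ + s₂ * 2 ^ x₂ * M ^ y₂ + s₃ * 2 ^ x₃ * M ^ y₃ = 0) :
    ∃ k, 1 ≤ k ∧ (M = 2 ^ k - 1 ∨ M = 2 ^ k + 1) := by
  obtain ⟨p, rfl⟩ := Nat.exists_eq_add_of_le hy₂
  obtain ⟨q, rfl⟩ := Nat.exists_eq_add_of_le hy₃
  have h' : s₁ * 2 ^ x₁ + s₂ * 2 ^ x₂ * M ^ p + s₃ * 2 ^ x₃ * M ^ q = 0 := by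
    refine (mul_eq_zero.1 ?_).resolve_left (pow_ne_zero y₁ (by omega : M ≠ 0))
    linear_combination h
  rcases Nat.eq_zero_or_pos p with rfl | hp <;> rcases Nat.eq_zero_or_pos q with rfl | hq
  · omega
  · exact mersenne_or_fermat_of_two_pow_add_two_pow_eq (x := x₁) (y := x₂) (c := x₃)
      hM hodd hq.ne' hs₁ hs₂ hs₃.neg (by linear_combination h')
  · exact mersenne_or_fermat_of_two_pow_add_two_pow_eq (x := x₁) (y := x₃) (c := x₂)
      hM hodd hp.ne' hs₁ hs₃ hs₂.neg (by linear_combination h')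
  · exfalso
    have hdvd : M ∣ s₁ * 2 ^ x₁ := by
      rw [show s₁ * 2 ^ x₁ = -(s₂ * 2 ^ x₂ * M ^ p + s₃ * 2 ^ x₃ * M ^ q) by linear_combination h']
      exact (dvd_add ((dvd_pow_self M hp.ne').mul_left _)
        ((dvd_pow_self M hq.ne').mul_left _)).neg_right
    have hMunit := Int.isUnit_of_odd_of_dvd_two_pow hodd ((hs₁.dvd_mul_left).1 hdvd)
    rcases Int.isUnit_iff.1 hMunit with rfl | rfl <;> omega

theorem mersenne_or_fermat_of_two_L_unit_relation_general
    (L : ℕ) (hL : L.Prime) (hLodd : Odd L)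
    (a b : ℤ)
    (e₁ e₂ e₃ : ℤ) (he₁ : e₁ = 1 ∨ e₁ = -1) (he₂ : e₂ = 1 ∨ e₂ = -1)
    (he₃ : e₃ = 1 ∨ e₃ = -1)
    (u₁ u₂ u₃ v₁ v₂ v₃ : ℕ)
    (hadef : a = e₁ * 2 ^ u₁ * (L : ℤ) ^ v₁)
    (hbdef : b = e₂ * 2 ^ u₂ * (L : ℤ) ^ v₂)
    (habdef : a + b = e₃ * 2 ^ u₃ * (L : ℤ) ^ v₃)
    (hvne : ¬ (v₁ = v₂ ∧ v₂ = v₃)) :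
    ∃ k : ℕ, 1 ≤ k ∧ ((L : ℤ) = 2 ^ k - 1 ∨ (L : ℤ) = 2 ^ k + 1) := by
  have hL3 : (3 : ℤ) ≤ L := by
    have := hL.two_le
    obtain ⟨t, rfl⟩ := hLodd
    omega
  have hodd : Odd (L : ℤ) := hLodd.natCast
  have hs₁ := Int.isUnit_iff.2 he₁
  have hs₂ := Int.isUnit_iff.2 he₂
  have hs₃ := (Int.isUnit_iff.2 he₃).neg
  have hsum : e₁ * 2 ^ u₁ * (L : ℤ) ^ v₁ + e₂ * 2 ^ u₂ * (L : ℤ) ^ v₂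
      + -e₃ * 2 ^ u₃ * (L : ℤ) ^ v₃ = 0 := by
    linear_combination habdef - hadef - hbdef
  obtain hmin | hmin | hmin :
      (v₁ ≤ v₂ ∧ v₁ ≤ v₃) ∨ (v₂ ≤ v₁ ∧ v₂ ≤ v₃) ∨ (v₃ ≤ v₁ ∧ v₃ ≤ v₂) := by omega
  · exact mersenne_or_fermat_of_add_add_eq_zero hL3 hodd hs₁ hs₂ hs₃ hmin.1 hmin.2
      (by omega) hsum
  · exact mersenne_or_fermat_of_add_add_eq_zero (x₁ := u₂) (x₂ := u₁) (x₃ := u₃)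
      hL3 hodd hs₂ hs₁ hs₃ hmin.1 hmin.2 (by omega) (by linear_combination hsum)
  · exact mersenne_or_fermat_of_add_add_eq_zero (x₁ := u₃) (x₂ := u₁) (x₃ := u₂)
      hL3 hodd hs₃ hs₁ hs₂ hmin.1 hmin.2 (by omega) (by linear_combination hsum)

/-- Let `L` be an odd prime and suppose there are nonzero integers `a`, `b` with
`a + b ≠ 0`, all three of `a`, `b`, `a + b` supported only on the primes `2` and `L`
(so `a²b²(a+b)² = 2ᵘ Lᵛ`), say `a = ±2^{u₁}L^{v₁}`, `b = ±2^{u₂}L^{v₂}`,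
`a + b = ±2^{u₃}L^{v₃}`, where `v₁, v₂, v₃` are not all equal.  Then `L` is a
Mersenne prime `2^k − 1` or a Fermat prime `2^k + 1`. -/
theorem mersenne_or_fermat_of_two_L_unit_relation
    (L : ℕ) (hL : L.Prime) (hLodd : Odd L)
    (a b : ℤ) (ha : a ≠ 0) (hb : b ≠ 0) (hab : a + b ≠ 0)
    (e₁ e₂ e₃ : ℤ) (he₁ : e₁ = 1 ∨ e₁ = -1) (he₂ : e₂ = 1 ∨ e₂ = -1)
    (he₃ : e₃ = 1 ∨ e₃ = -1)
    (u₁ u₂ u₃ v₁ v₂ v₃ : ℕ)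
    (hadef : a = e₁ * 2 ^ u₁ * (L : ℤ) ^ v₁)
    (hbdef : b = e₂ * 2 ^ u₂ * (L : ℤ) ^ v₂)
    (habdef : a + b = e₃ * 2 ^ u₃ * (L : ℤ) ^ v₃)
    (hvne : ¬ (v₁ = v₂ ∧ v₂ = v₃)) :
    ∃ k : ℕ, 1 ≤ k ∧ ((L : ℤ) = 2 ^ k - 1 ∨ (L : ℤ) = 2 ^ k + 1) :=
  mersenne_or_fermat_of_two_L_unit_relation_general L hL hLodd a b e₁ e₂ e₃ he₁ he₂ he₃ u₁ u₂ u₃ v₁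
    v₂ v₃ hadef hbdef habdef hvne
end

section
/- Let K = ℚ and S = {2, L} for an odd prime L. If there exist signs ε₁, ε₂, ε₃ ∈ {±1} and nonnegative integers u₁, u₂, u₃, v₁, v₂, v₃ with ε₁2^{u₁}L^{v₁} + ε₂2^{u₂}L^{v₂} = ε₃2^{u₃}L^{v₃}, min(v₁,v₂,v₃) = 0, not all of v₁, v₂, v₃ equal to 0, and min(u₁,u₂) = 0 (with u₃ arbitrary), then L = 2^k − 1 or L = 2^k + 1 for some k ≥ 1. -/
private lemma reduce_aux (L : ℕ) (hL3 : 3 ≤ L) (hodd : Odd L)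
    (e f g : ℤ) (he : e = 1 ∨ e = -1) (hf : f = 1 ∨ f = -1) (hg : g = 1 ∨ g = -1)
    (a b c v : ℕ) (hv : 1 ≤ v)
    (heq : e * 2 ^ a + f * 2 ^ b = g * 2 ^ c * (L : ℤ) ^ v)
    (hmin : a = 0 ∨ b = 0 ∨ c = 0) :
    ∃ u : ℕ, (L : ℤ) ^ v = 2 ^ u + 1 ∨ (L : ℤ) ^ v = 2 ^ u - 1 := by
  have hLZodd : Odd ((L : ℤ)) := by
    obtain ⟨m, hm⟩ := hodd
    exact ⟨(m : ℤ), by push_cast [hm]; ring⟩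
  have hYodd : ((L : ℤ) ^ v) % 2 = 1 := Int.odd_iff.mp (hLZodd.pow)
  have hY3 : (3 : ℤ) ≤ (L : ℤ) ^ v := by
    have h1 : (3 : ℤ) ≤ (L : ℤ) := by exact_mod_cast hL3
    calc (3 : ℤ) ≤ (L : ℤ) := h1
      _ ≤ (L : ℤ) ^ v := le_self_pow₀ (by linarith) (by omega)
  rcases Nat.eq_zero_or_pos c with rfl | hc0
  · -- c = 0
    rw [pow_zero] at heq
    have hab : a = 0 ∨ b = 0 := by
      by_contra h
      push_neg at h
      have h2 : (2 : ℤ) ∣ g * 1 * (L : ℤ) ^ v := by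
        rw [← heq]
        exact dvd_add ((dvd_pow_self 2 h.1).mul_left e) ((dvd_pow_self 2 h.2).mul_left f)
      rcases hg with rfl | rfl <;> simp only [one_mul, neg_mul, dvd_neg, mul_one] at h2 <;>
        omega
    rcases hab with rfl | rfl
    · refine ⟨b, ?_⟩
      simp only [pow_zero, mul_one] at heq
      have hB1 : (0 : ℤ) < 2 ^ b := by positivity
      revert heq hB1
      generalize (2 : ℤ) ^ b = B
      intro hB1 heq
      rcases he with rfl | rfl <;> rcases hf with rfl | rfl <;> rcases hg with rfl | rfl <;>
        omega
    · refine ⟨a, ?_⟩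
      simp only [pow_zero, mul_one] at heq
      have hA1 : (0 : ℤ) < 2 ^ a := by positivity
      revert heq hA1
      generalize (2 : ℤ) ^ a = A
      intro hA1 heq
      rcases he with rfl | rfl <;> rcases hf with rfl | rfl <;> rcases hg with rfl | rfl <;>
        omega
  · -- c ≥ 1 : impossible
    exfalso
    have hac : a = 0 ∨ b = 0 := by
      rcases hmin with h | h | h
      · exact Or.inl h
      · exact Or.inr h
      · omega
    have hWdvd : (2 : ℤ) ∣ 2 ^ c * (L : ℤ) ^ v :=
      dvd_mul_of_dvd_left (dvd_pow_self 2 (by omega)) _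
    have hW6 : (6 : ℤ) ≤ 2 ^ c * (L : ℤ) ^ v := by
      have h2 : (2 : ℤ) ≤ 2 ^ c := by
        calc (2 : ℤ) = 2 ^ 1 := by norm_num
          _ ≤ 2 ^ c := pow_le_pow_right₀ (by norm_num) (by omega)
      calc (6 : ℤ) = 2 * 3 := by norm_num
        _ ≤ 2 ^ c * (L : ℤ) ^ v := mul_le_mul h2 hY3 (by norm_num) (by positivity)
    rcases hac with rfl | rfl
    · rw [pow_zero, mul_one, mul_assoc] at heq
      have hBd : (2 : ℤ) ∣ 2 ^ b ∨ (2 : ℤ) ^ b = 1 := by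
        rcases Nat.eq_zero_or_pos b with rfl | hb
        · right; norm_num
        · left; exact dvd_pow_self 2 (by omega)
      obtain ⟨B, hB⟩ : ∃ B : ℤ, (2 : ℤ) ^ b = B := ⟨_, rfl⟩
      obtain ⟨W, hWe⟩ : ∃ W : ℤ, (2 : ℤ) ^ c * (L : ℤ) ^ v = W := ⟨_, rfl⟩
      rw [hB] at heq hBd
      rw [hWe] at heq hWdvd hW6
      rcases he with rfl | rfl <;> rcases hf with rfl | rfl <;> rcases hg with rfl | rfl <;>
        rcases hBd with h3 | h3 <;> omega
    · rw [pow_zero, mul_one, mul_assoc] at heq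
      have hAd : (2 : ℤ) ∣ 2 ^ a ∨ (2 : ℤ) ^ a = 1 := by
        rcases Nat.eq_zero_or_pos a with rfl | ha
        · right; norm_num
        · left; exact dvd_pow_self 2 (by omega)
      obtain ⟨A, hA⟩ : ∃ A : ℤ, (2 : ℤ) ^ a = A := ⟨_, rfl⟩
      obtain ⟨W, hWe⟩ : ∃ W : ℤ, (2 : ℤ) ^ c * (L : ℤ) ^ v = W := ⟨_, rfl⟩
      rw [hA] at heq hAd
      rw [hWe] at heq hWdvd hW6
      rcases he with rfl | rfl <;> rcases hf with rfl | rfl <;> rcases hg with rfl | rfl <;>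
        rcases hAd with h3 | h3 <;> omega

private lemma key_aux (L : ℕ) (hL : L.Prime) (hodd : Odd L) (v u : ℕ) (hv : 1 ≤ v)
    (h : (L : ℤ) ^ v = 2 ^ u + 1 ∨ (L : ℤ) ^ v = 2 ^ u - 1) :
    ∃ k : ℕ, 1 ≤ k ∧ ((L : ℤ) = 2 ^ k - 1 ∨ (L : ℤ) = 2 ^ k + 1) := by
  have hL3 : 3 ≤ L := by
    obtain ⟨m, hm⟩ := hodd
    have := hL.two_le
    omega
  rcases h with h | h
  · -- L^v = 2^u + 1, use L - 1 ∣ 2^u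
    have hn : L ^ v = 2 ^ u + 1 := by exact_mod_cast h
    have hdvd : L - 1 ∣ 2 ^ u := by
      have h1 : L - 1 ∣ L ^ v - 1 := by
        simpa using Nat.sub_dvd_pow_sub_pow L 1 v
      rw [hn] at h1
      simpa using h1
    obtain ⟨k, _, hke⟩ := (Nat.dvd_prime_pow Nat.prime_two).mp hdvd
    have hk1 : 1 ≤ k := by
      rcases Nat.eq_zero_or_pos k with rfl | hk
      · simp at hke; omega
      · exact hk
    have hLk : L = 2 ^ k + 1 := by omega
    exact ⟨k, hk1, Or.inr (by exact_mod_cast congrArg (Nat.cast : ℕ → ℤ) hLk)⟩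
  · -- L^v = 2^u - 1
    have hn : L ^ v + 1 = 2 ^ u := by
      have h' : (L : ℤ) ^ v + 1 = 2 ^ u := by linarith
      exact_mod_cast h'
    rcases Nat.even_or_odd v with hev | hov
    · exfalso
      obtain ⟨t, rfl⟩ := hev
      have ht : 1 ≤ t := by omega
      obtain ⟨m, hm⟩ := hodd.pow (n := t)
      have hLt3 : 3 ≤ L ^ t := le_trans hL3 (Nat.le_self_pow (by omega) L)
      have hsq : L ^ (t + t) = L ^ t * L ^ t := by rw [← pow_add]
      rw [hsq, hm] at hn
      have hn' : 4 * (m * m) + 4 * m + 2 = 2 ^ u := by rw [← hn]; ring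
      have hm1 : 1 ≤ m := by omega
      rcases Nat.lt_or_ge u 2 with hu | hu
      · interval_cases u <;> omega
      · have h4 : (4 : ℕ) ∣ 2 ^ u := by
          calc (4 : ℕ) = 2 ^ 2 := by norm_num
            _ ∣ 2 ^ u := pow_dvd_pow 2 hu
        omega
    · -- v odd : L + 1 ∣ L^v + 1 = 2^u
      have hdZ : ((L : ℤ) + 1) ∣ (L : ℤ) ^ v + 1 := by
        have := hov.add_dvd_pow_add_pow (L : ℤ) 1
        simpa using this
      have hdvd : L + 1 ∣ 2 ^ u := by
        have h2 : ((L + 1 : ℕ) : ℤ) ∣ ((2 ^ u : ℕ) : ℤ) := by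
          push_cast
          have hx : (L : ℤ) ^ v + 1 = 2 ^ u := by linarith
          rw [← hx]
          exact hdZ
        exact_mod_cast h2
      obtain ⟨k, _, hke⟩ := (Nat.dvd_prime_pow Nat.prime_two).mp hdvd
      have hk1 : 1 ≤ k := by
        rcases Nat.eq_zero_or_pos k with rfl | hk
        · simp at hke; omega
        · exact hk
      have hLk : L = 2 ^ k - 1 ∧ 1 ≤ 2 ^ k := by
        constructor
        · omega
        · exact Nat.one_le_two_pow
      refine ⟨k, hk1, Or.inl ?_⟩
      have : (L : ℤ) + 1 = 2 ^ k := by exact_mod_cast congrArg (Nat.cast : ℕ → ℤ) hke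
      linarith

/-- `S`-unit equation analysis over `ℚ` with `S = {2, L}`, `L` an odd prime.
Suppose `ε₁2^{u₁}L^{v₁} + ε₂2^{u₂}L^{v₂} = ε₃2^{u₃}L^{v₃}` with signs `εᵢ = ±1`,
`min(v₁,v₂,v₃) = 0`, the `vᵢ` not all `0`, and `min(u₁,u₂) = 0`.
Then `L = 2^k − 1` or `L = 2^k + 1` for some `k ≥ 1`. -/
theorem mersenne_or_fermat_of_S_unit_relation
    (L : ℕ) (hL : L.Prime) (hLodd : Odd L)
    (e₁ e₂ e₃ : ℤ) (he₁ : e₁ = 1 ∨ e₁ = -1) (he₂ : e₂ = 1 ∨ e₂ = -1)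
    (he₃ : e₃ = 1 ∨ e₃ = -1)
    (u₁ u₂ u₃ v₁ v₂ v₃ : ℕ)
    (heq : e₁ * 2 ^ u₁ * (L : ℤ) ^ v₁ + e₂ * 2 ^ u₂ * (L : ℤ) ^ v₂
      = e₃ * 2 ^ u₃ * (L : ℤ) ^ v₃)
    (hvmin : min v₁ (min v₂ v₃) = 0)
    (hvne : ¬ (v₁ = 0 ∧ v₂ = 0 ∧ v₃ = 0))
    (humin : min u₁ u₂ = 0) :
    ∃ k : ℕ, 1 ≤ k ∧ ((L : ℤ) = 2 ^ k - 1 ∨ (L : ℤ) = 2 ^ k + 1) := by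
  have hL3 : 3 ≤ L := by
    obtain ⟨m, hm⟩ := hLodd
    have := hL.two_le
    omega
  have hnd : ∀ e : ℤ, (e = 1 ∨ e = -1) → ∀ u : ℕ, ¬ (L : ℤ) ∣ e * 2 ^ u := by
    intro e he u hdvd
    have h2 : (L : ℤ) ∣ 2 ^ u := by
      rcases he with rfl | rfl
      · simpa using hdvd
      · simpa using hdvd
    have h2n : L ∣ 2 ^ u := by exact_mod_cast h2
    have hle := Nat.le_of_dvd (by norm_num) (hL.dvd_of_dvd_pow h2n)
    omega
  have hmin' : v₁ = 0 ∨ v₂ = 0 ∨ v₃ = 0 := by omega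
  have h12 : ¬ (1 ≤ v₁ ∧ 1 ≤ v₂) := by
    rintro ⟨h1, h2⟩
    have hv3 : v₃ = 0 := by omega
    subst hv3
    apply hnd e₃ he₃ u₃
    have hd : (L : ℤ) ∣ e₁ * 2 ^ u₁ * (L : ℤ) ^ v₁ + e₂ * 2 ^ u₂ * (L : ℤ) ^ v₂ :=
      dvd_add ((dvd_pow_self (L : ℤ) (by omega)).mul_left _)
        ((dvd_pow_self (L : ℤ) (by omega)).mul_left _)
    rw [heq, pow_zero, mul_one] at hd
    exact hd
  have h13 : ¬ (1 ≤ v₁ ∧ 1 ≤ v₃) := by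
    rintro ⟨h1, h3⟩
    have hv2 : v₂ = 0 := by omega
    subst hv2
    apply hnd e₂ he₂ u₂
    have hd : (L : ℤ) ∣ e₃ * 2 ^ u₃ * (L : ℤ) ^ v₃ - e₁ * 2 ^ u₁ * (L : ℤ) ^ v₁ :=
      dvd_sub ((dvd_pow_self (L : ℤ) (by omega)).mul_left _)
        ((dvd_pow_self (L : ℤ) (by omega)).mul_left _)
    have he' : e₂ * 2 ^ u₂ = e₃ * 2 ^ u₃ * (L : ℤ) ^ v₃ - e₁ * 2 ^ u₁ * (L : ℤ) ^ v₁ := by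
      rw [pow_zero, mul_one] at heq
      linarith
    rw [← he'] at hd
    exact hd
  have h23 : ¬ (1 ≤ v₂ ∧ 1 ≤ v₃) := by
    rintro ⟨h2, h3⟩
    have hv1 : v₁ = 0 := by omega
    subst hv1
    apply hnd e₁ he₁ u₁
    have hd : (L : ℤ) ∣ e₃ * 2 ^ u₃ * (L : ℤ) ^ v₃ - e₂ * 2 ^ u₂ * (L : ℤ) ^ v₂ :=
      dvd_sub ((dvd_pow_self (L : ℤ) (by omega)).mul_left _)
        ((dvd_pow_self (L : ℤ) (by omega)).mul_left _)
    have he' : e₁ * 2 ^ u₁ = e₃ * 2 ^ u₃ * (L : ℤ) ^ v₃ - e₂ * 2 ^ u₂ * (L : ℤ) ^ v₂ := by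
      rw [pow_zero, mul_one] at heq
      linarith
    rw [← he'] at hd
    exact hd
  have hsplit : (v₂ = 0 ∧ v₃ = 0 ∧ 1 ≤ v₁) ∨ (v₁ = 0 ∧ v₃ = 0 ∧ 1 ≤ v₂)
      ∨ (v₁ = 0 ∧ v₂ = 0 ∧ 1 ≤ v₃) := by omega
  rcases hsplit with ⟨rfl, rfl, hv⟩ | ⟨rfl, rfl, hv⟩ | ⟨rfl, rfl, hv⟩
  · -- v₂ = v₃ = 0, v₁ ≥ 1
    simp only [pow_zero, mul_one] at heq
    obtain ⟨u, hu⟩ := reduce_aux L hL3 hLodd e₂ (-e₃) (-e₁)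
      he₂ (by rcases he₃ with rfl | rfl <;> simp) (by rcases he₁ with rfl | rfl <;> simp)
      u₂ u₃ u₁ v₁ hv (by linear_combination heq) (by omega)
    exact key_aux L hL hLodd v₁ u hv hu
  · -- v₁ = v₃ = 0, v₂ ≥ 1
    simp only [pow_zero, mul_one] at heq
    obtain ⟨u, hu⟩ := reduce_aux L hL3 hLodd e₁ (-e₃) (-e₂)
      he₁ (by rcases he₃ with rfl | rfl <;> simp) (by rcases he₂ with rfl | rfl <;> simp)
      u₁ u₃ u₂ v₂ hv (by linear_combination heq) (by omega)
    exact key_aux L hL hLodd v₂ u hv hu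
  · -- v₁ = v₂ = 0, v₃ ≥ 1
    simp only [pow_zero, mul_one] at heq
    obtain ⟨u, hu⟩ := reduce_aux L hL3 hLodd e₁ e₂ e₃ he₁ he₂ he₃
      u₁ u₂ u₃ v₃ hv heq (by omega)
    exact key_aux L hL hLodd v₃ u hv hu
end
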